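/- Let G = (V, E) be a cubic graph and let (X, Y) be the corresponding instance of MLA. For every edge {v_i, v_j} ∈ E and every feasible labeling of (X, Y), if no substring of B_X-VE(e_{i,j}) is labeled by a duplication coming from B_X-VE(v_i) or from B_X-VE(v_j), then the total cost of the operations labeling the unmatched characters of B_X-VE(e_{i,j}) is at least 3. -/

import Mathlib

namespace MLA

/-! ### Generic labelings of aligned genomes -/

/-- An operation labeling a substring of the genome `X`: the substring of length
`len` starting at position `start`; `src = none` means a loss, `src = some s`
means a duplication coming from the identical occurrence starting at `s`. -/
structure Op where
  start : ℕ
  len : ℕ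
  src : Option ℕ
deriving DecidableEq

/-- Cost of an operation: a duplication costs `1`, a loss of length `z` costs `z`. -/
def Op.cost (o : Op) : ℕ := if o.src = none then o.len else 1

/-- The positions covered by (the target substring of) an operation. -/
def Op.covers (o : Op) (p : ℕ) : Prop := o.start ≤ p ∧ p < o.start + o.len

instance (o : Op) (p : ℕ) : Decidable (o.covers p) := by
  unfold Op.covers; infer_instance

/-- Validity of an operation with respect to the genome `X`: nonempty target
inside `X`, and a duplication comes from a different occurrence in `X` of a
string identical to its target substring. -/
def Op.valid {α : Type*} (X : List α) (o : Op) : Prop :=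
  1 ≤ o.len ∧ o.start + o.len ≤ X.length ∧
    ∀ s, o.src = some s → s ≠ o.start ∧ s + o.len ≤ X.length ∧
      ∀ t < o.len, X[s + t]? = X[o.start + t]?

/-- A duplication from occurrence `s` to occurrence `t` is maximal if the
characters immediately to the left of `s` and `t` differ (or one does not
exist) and likewise on the right. -/
def Op.maximalDup {α : Type*} (X : List α) (o : Op) : Prop :=
  ∃ s, o.src = some s ∧
    (s = 0 ∨ o.start = 0 ∨ X[s - 1]? ≠ X[o.start - 1]?) ∧
    (X[s + o.len]? = none ∨ X[o.start + o.len]? = none ∨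
      X[s + o.len]? ≠ X[o.start + o.len]?)

/-- `L` is a labeling of the set `U` of unmatched positions of the genome `X`:
the target substrings of its operations are valid and partition `U`. -/
structure IsLabeling {α : Type*} (X : List α) (U : ℕ → Prop) (L : Finset Op) :
    Prop where
  valid : ∀ o ∈ L, o.valid X
  unmatched : ∀ o ∈ L, ∀ p, o.covers p → U p
  covers : ∀ p, U p → ∃ o ∈ L, o.covers p
  disjoint : ∀ o ∈ L, ∀ o' ∈ L, ∀ p, o.covers p → o'.covers p → o = o'

/-- Arc of the duplication graph of a labeling: from the operation owning part
of the source occurrence of a duplication to the duplication itself. -/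
def dupArc (L : Finset Op) (o o' : Op) : Prop :=
  o ∈ L ∧ o' ∈ L ∧ ∃ s, o'.src = some s ∧ ∃ p, o.covers p ∧ s ≤ p ∧ p < s + o'.len

/-- A labeling is feasible if its duplication graph has no cycle. -/
def Feasible (L : Finset Op) : Prop := ∀ o, ¬ Relation.TransGen (dupArc L) o o

/-- Cost of a labeling. -/
def cost (L : Finset Op) : ℕ := ∑ o ∈ L, o.cost

/-- The operations of `L` labeling some position in `[lo, hi)`. -/
def restrict (L : Finset Op) (lo hi : ℕ) : Finset Op :=
  L.filter fun o => ∃ p ∈ Finset.Ico lo hi, o.covers p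

/-- The total cost of the operations of `L` labeling positions in `[lo, hi)`. -/
def blockCost (L : Finset Op) (lo hi : ℕ) : ℕ := cost (restrict L lo hi)

/-! ### The reduction from Minimum Vertex Cover on cubic graphs -/

/-- The alphabet of the reduction (all symbols are pairwise distinct). -/
inductive Sym (n : ℕ) : Type
  | s  (i : Fin n)
  | se (i j : Fin n)
  | x  (i : Fin n) (p : ℕ)
  | e  (i j : Fin n) (t : Fin 2)
  | z  (i : Fin n) (t : Fin 8)
  | w  (i : Fin n) (t : Fin 4)
  | u  (i : Fin n) (t : Fin 6)
deriving DecidableEq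

variable {n : ℕ} (G : SimpleGraph (Fin n)) [DecidableRel G.Adj]

/-- The edges of `G` as pairs `(i, j)` with `i < j`, in lexicographic order. -/
def edgePairs : List (Fin n × Fin n) :=
  (List.finRange n).flatMap fun i =>
    ((List.finRange n).filter fun j => decide (i < j ∧ G.Adj i j)).map fun j => (i, j)

/-- The edges incident to `i`, in edge order. -/
def incEdges (i : Fin n) : List (Fin n × Fin n) :=
  (edgePairs G).filter fun e => decide (e.1 = i ∨ e.2 = i)

/-- The `t`-th (`0`-based) edge incident to `i`. -/
def nthInc (i : Fin n) (t : ℕ) : Fin n × Fin n := (incEdges G i).getD t (i, i)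

/-- The `0`-based index of edge `e` among the edges incident to `i`. -/
def edgeIdx (i : Fin n) (e : Fin n × Fin n) : ℕ := (incEdges G i).idxOf e

/-- Left part of the `i`-encoding of edge `e`. -/
def encL (i : Fin n) (e : Fin n × Fin n) : List (Sym n) :=
  if i = e.1 then [.x i (edgeIdx G i e)] else [.e e.1 e.2 0, .e e.1 e.2 1]

/-- Right part of the `i`-encoding of edge `e`. -/
def encR (i : Fin n) (e : Fin n × Fin n) : List (Sym n) :=
  if i = e.1 then [.e e.1 e.2 0, .e e.1 e.2 1] else [.x i (edgeIdx G i e)]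

/-- The `i`-encoding of edge `e`. -/
def enc (i : Fin n) (e : Fin n × Fin n) : List (Sym n) := encL G i e ++ encR G i e

/-- Block `B_{X-VE}(e)`. -/
def edgeBlockX (e : Fin n × Fin n) : List (Sym n) :=
  [.se e.1 e.2, .x e.1 (edgeIdx G e.1 e), .e e.1 e.2 0, .e e.1 e.2 1,
   .x e.2 (edgeIdx G e.2 e)]

/-- Block `B_{X-VE}(v_i)`. -/
def vertexBlockX (i : Fin n) : List (Sym n) :=
  [.s i, .z i 0, .z i 1] ++ enc G i (nthInc G i 0) ++
  [.z i 2, .z i 3] ++ enc G i (nthInc G i 1) ++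
  [.z i 4, .z i 5] ++ enc G i (nthInc G i 2) ++
  [.z i 6, .z i 7]

/-- Block `B_{X,A,1}(v_i) = B_{Y,A,1}(v_i)`. -/
def A1Block (i : Fin n) : List (Sym n) :=
  [.w i 0, .z i 0, .z i 1, .w i 1, .z i 2, .z i 3,
   .w i 2, .z i 4, .z i 5, .w i 3, .z i 6, .z i 7]

/-- Block `B_{X,A,2}(v_i) = B_{Y,A,2}(v_i)`. -/
def A2Block (i : Fin n) : List (Sym n) :=
  [.u i 0, .z i 1] ++ encL G i (nthInc G i 0) ++ [.u i 1] ++ encR G i (nthInc G i 0) ++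
  [.z i 2, .u i 2, .z i 3] ++ encL G i (nthInc G i 1) ++ [.u i 3] ++ encR G i (nthInc G i 1) ++
  [.z i 4, .u i 4, .z i 5] ++ encL G i (nthInc G i 2) ++ [.u i 5] ++ encR G i (nthInc G i 2) ++
  [.z i 6]

/-- The genome `X` corresponding to the cubic graph `G`. -/
def genomeX : List (Sym n) :=
  ((List.finRange n).flatMap fun i => vertexBlockX G i) ++
  ((edgePairs G).flatMap fun e => edgeBlockX G e) ++
  ((List.finRange n).flatMap fun i => A1Block i ++ A2Block G i)

/-- The aligned genome `Y` (`none` denotes a gap). -/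
def alignedY : List (Option (Sym n)) :=
  ((List.finRange n).flatMap fun i => some (.s i) :: List.replicate 17 none) ++
  ((edgePairs G).flatMap fun e => some (.se e.1 e.2) :: List.replicate 4 none) ++
  ((List.finRange n).flatMap fun i => (A1Block i ++ A2Block G i).map some)

/-- The unmatched positions of `X` (those aligned with a gap of `Y`). -/
def UnmatchedX (p : ℕ) : Prop := (alignedY G)[p]? = some none

/-- Start position of `B_{X-VE}(v_i)` in `X`. -/
def vStart (i : Fin n) : ℕ := 18 * i.val

/-- Start position of `B_{X-VE}(e)` in `X`. -/
def eStart (e : Fin n × Fin n) : ℕ := 18 * n + 5 * (edgePairs G).idxOf e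

/-- Start position of `B_{X,A,1}(v_i)` in `X` (`B_{X,A,2}(v_i)` starts 12 later). -/
def aStart (i : Fin n) : ℕ := 18 * n + 5 * (edgePairs G).length + 33 * i.val

/-- Offset of the `i`-encoding inside `B_{X-VE}(e)`. -/
def encOff (i : Fin n) (e : Fin n × Fin n) : ℕ := if i = e.1 then 1 else 2

/-- The type-a labeling of `B_{X-VE}(v_i)`: four duplications coming from
`B_{X,A,1}(v_i)` (for the pairs of `z`-symbols) and three duplications coming
from the blocks of the three edges incident to `v_i` (for the encodings). -/
def typeA (i : Fin n) : Finset Op :=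
  { ⟨vStart i + 1, 2, some (aStart G i + 1)⟩,
    ⟨vStart i + 6, 2, some (aStart G i + 4)⟩,
    ⟨vStart i + 11, 2, some (aStart G i + 7)⟩,
    ⟨vStart i + 16, 2, some (aStart G i + 10)⟩,
    ⟨vStart i + 3, 3, some (eStart G (nthInc G i 0) + encOff i (nthInc G i 0))⟩,
    ⟨vStart i + 8, 3, some (eStart G (nthInc G i 1) + encOff i (nthInc G i 1))⟩,
    ⟨vStart i + 13, 3, some (eStart G (nthInc G i 2) + encOff i (nthInc G i 2))⟩ }

/-- The type-b labeling of `B_{X-VE}(v_i)`: six duplications coming from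
`B_{X,A,2}(v_i)` and two losses of length one (for `z_{i,1}` and `z_{i,8}`). -/
def typeB (i : Fin n) : Finset Op :=
  let a := aStart G i + 12
  let l1 := (encL G i (nthInc G i 0)).length
  let l2 := (encL G i (nthInc G i 1)).length
  let l3 := (encL G i (nthInc G i 2)).length
  { ⟨vStart i + 1, 1, none⟩,
    ⟨vStart i + 17, 1, none⟩,
    ⟨vStart i + 2, 1 + l1, some (a + 1)⟩,
    ⟨vStart i + 3 + l1, 4 - l1, some (a + 3 + l1)⟩,
    ⟨vStart i + 7, 1 + l2, some (a + 8)⟩,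
    ⟨vStart i + 8 + l2, 4 - l2, some (a + 10 + l2)⟩,
    ⟨vStart i + 12, 1 + l3, some (a + 15)⟩,
    ⟨vStart i + 13 + l3, 4 - l3, some (a + 17 + l3)⟩ }

/-- The cost-2 labeling of `B_{X-VE}(e)` using a duplication coming from
`B_{X-VE}(v_i)` (where `i = e.1`) and a loss for the last character. -/
def edgeLabA (e : Fin n × Fin n) : Finset Op :=
  { ⟨eStart G e + 1, 3, some (vStart e.1 + 3 + 5 * edgeIdx G e.1 e)⟩,
    ⟨eStart G e + 4, 1, none⟩ }

/-- The cost-2 labeling of `B_{X-VE}(e)` using a duplication coming from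
`B_{X-VE}(v_j)` (where `j = e.2`) and a loss for the second character. -/
def edgeLabB (e : Fin n × Fin n) : Finset Op :=
  { ⟨eStart G e + 2, 3, some (vStart e.2 + 3 + 5 * edgeIdx G e.2 e)⟩,
    ⟨eStart G e + 1, 1, none⟩ }

/-- `C` is a vertex cover of `G`. -/
def IsVC (C : Finset (Fin n)) : Prop := ∀ ⦃u v : Fin n⦄, G.Adj u v → u ∈ C ∨ v ∈ C

end MLA

/-!
The unmatched characters of `B_X-VE(e_{i,j})` are `x_{i,p} e_{i,j,1} e_{i,j,2} x_{j,q}`, flanked by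
matched characters, so they are labeled by operations inside the block, each of cost at least `1`.
In `X`, the adjacent pair `x_{i,p} e_{i,j,1}` occurs only in the edge block itself and in
`B_X-VE(v_i)`, and `e_{i,j,2} x_{j,q}` only in the edge block and in `B_X-VE(v_j)`: in the
`B_{X,A,2}` blocks the two halves of every encoding are separated by a `u`-symbol, and no pair of
this shape straddles two blocks since blocks start with `s`, `s_e` or `w`. Hence no duplication
covers the first two or the last two of the four characters. A single operation is then a loss
of cost `4`; otherwise, if the operations at the two ends both cost `1`, each covers one
character and a third operation is needed in between.
-/
namespace List
variable {α β : Type*}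

theorem getElem?_flatMap_of_length_eq {l : List β} {f : β → List α} {L : ℕ}
    (hf : ∀ x ∈ l, (f x).length = L) (q : ℕ) :
    (l.flatMap f)[q]? = l[q / L]?.bind fun x => (f x)[q % L]? := by
  rcases Nat.eq_zero_or_pos L with rfl | hL
  · have hnil : ∀ x ∈ l, f x = [] := fun x hx => length_eq_zero_iff.1 (hf x hx)
    rw [flatMap_eq_nil_iff.2 hnil]
    cases hq : l[q / 0]? with
    | none => simp
    | some x => simp [hnil x (mem_of_getElem? hq)]
  induction l generalizing q with
  | nil => simp
  | cons x l ih =>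
    have hx : (f x).length = L := hf x mem_cons_self
    rw [flatMap_cons, getElem?_append, hx]
    rcases Nat.lt_or_ge q L with hq | hq
    · simp [hq, Nat.div_eq_of_lt hq, Nat.mod_eq_of_lt hq]
    · rw [if_neg (by omega), ih (fun y hy => hf y (mem_cons_of_mem x hy)),
        Nat.div_eq_sub_div hL hq, Nat.mod_eq_sub_mod hq]
      simp

theorem pair_append {l₁ l₂ : List α} {q : ℕ} {a b : α} (hb : l₂.head? ≠ some b)
    (h₀ : (l₁ ++ l₂)[q]? = some a) (h₁ : (l₁ ++ l₂)[q + 1]? = some b) :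
    (l₁[q]? = some a ∧ l₁[q + 1]? = some b) ∨
      (l₁.length ≤ q ∧ l₂[q - l₁.length]? = some a ∧ l₂[q - l₁.length + 1]? = some b) := by
  rw [getElem?_append] at h₀ h₁
  rcases Nat.lt_trichotomy (q + 1) l₁.length with hq | hq | hq
  · rw [if_pos (by omega)] at h₀
    rw [if_pos hq] at h₁
    exact Or.inl ⟨h₀, h₁⟩
  · rw [if_neg (by omega), hq, Nat.sub_self, ← head?_eq_getElem?] at h₁
    exact absurd h₁ hb
  · rw [if_neg (by omega)] at h₀ h₁
    exact Or.inr ⟨by omega, h₀, by rwa [← Nat.sub_add_comm (by omega)]⟩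

theorem pair_flatMap {l : List β} {f : β → List α} {L : ℕ} {q : ℕ} {a b : α}
    (hf : ∀ x ∈ l, (f x).length = L) (hb : ∀ x ∈ l, (f x).head? ≠ some b)
    (h₀ : (l.flatMap f)[q]? = some a) (h₁ : (l.flatMap f)[q + 1]? = some b) :
    ∃ k, ∃ hk : k < l.length, ∃ r, q = L * k + r ∧
      (f l[k])[r]? = some a ∧ (f l[k])[r + 1]? = some b := by
  rw [getElem?_flatMap_of_length_eq hf] at h₀ h₁
  obtain ⟨x, hx, hxa⟩ := Option.bind_eq_some_iff.1 h₀
  obtain ⟨y, hy, hyb⟩ := Option.bind_eq_some_iff.1 h₁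
  have hL : 0 < L := by
    have := (getElem?_eq_some_iff.1 hxa).1
    rw [hf x (mem_of_getElem? hx)] at this
    omega
  obtain ⟨hk, rfl⟩ := getElem?_eq_some_iff.1 hx
  refine ⟨q / L, hk, q % L, (Nat.div_add_mod q L).symm, hxa, ?_⟩
  have hq := Nat.div_add_mod q L
  have hr := Nat.mod_lt q hL
  by_cases hlast : q % L + 1 < L
  · obtain ⟨hdiv, hmod⟩ := (Nat.div_mod_unique hL).2 (⟨by linarith, hlast⟩ :
      q % L + 1 + L * (q / L) = q + 1 ∧ _)
    rwa [hdiv, hmod, hx, Option.bind_some] at h₁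
  · obtain ⟨hdiv, hmod⟩ := (Nat.div_mod_unique hL).2 (⟨by rw [mul_add]; omega, hL⟩ :
      0 + L * (q / L + 1) = q + 1 ∧ _)
    rw [hmod, ← head?_eq_getElem?] at hyb
    exact absurd hyb (hb y (mem_of_getElem? hy))

theorem pair_map {l : List α} {r : ℕ} {a b : α} (f : α → β) (h₀ : l[r]? = some a)
    (h₁ : l[r + 1]? = some b) : (l.map f)[r]? = some (f a) ∧ (l.map f)[r + 1]? = some (f b) := by
  simp [h₀, h₁]

theorem head?_flatMap_ne {l : List β} {f : β → List α} {b : α}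
    (hb : ∀ x ∈ l, (f x).head? ≠ some b) : (l.flatMap f).head? ≠ some b := by
  rw [head?_flatMap]
  intro h
  obtain ⟨x, hx, hfx⟩ := exists_of_findSome?_eq_some h
  exact hb x hx hfx

end List

namespace MLA

section Labeling

variable {α : Type*}

theorem Op.cost_eq_len {o : Op} (h : o.src = none) : o.cost = o.len := if_pos h

theorem Op.one_le_cost {o : Op} (h : 1 ≤ o.len) : 1 ≤ o.cost := by
  unfold Op.cost; split <;> omega

theorem Op.covers_of_le_of_le {o : Op} {p q r : ℕ} (hp : o.covers p) (hr : o.covers r)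
    (hpq : p ≤ q) (hqr : q ≤ r) : o.covers q :=
  ⟨hp.1.trans hpq, hqr.trans_lt hr.2⟩

theorem Op.valid.getElem?_src {X : List α} {o : Op} (ho : o.valid X) {s p : ℕ}
    (hs : o.src = some s) (hp : o.covers p) : X[s + (p - o.start)]? = X[p]? := by
  have h := (ho.2.2 s hs).2.2 (p - o.start) (by have := hp.1; have := hp.2; omega)
  rwa [Nat.add_sub_cancel' hp.1] at h

theorem IsLabeling.not_covers {X : List α} {U : ℕ → Prop} {L : Finset Op}
    (hL : IsLabeling X U L) {o : Op} (ho : o ∈ L) {p : ℕ} (hp : ¬ U p) : ¬ o.covers p :=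
  fun h => hp (hL.unmatched o ho p h)

theorem card_le_cost {R : Finset Op} (hR : ∀ o ∈ R, 1 ≤ o.len) : R.card ≤ cost R := by
  unfold cost
  simpa using Finset.card_nsmul_le_sum R Op.cost 1 fun o ho => Op.one_le_cost (hR o ho)

theorem three_le_cost_of_no_dup_pairs {R : Finset Op} {p : ℕ} (hR : ∀ o ∈ R, 1 ≤ o.len)
    (hcov : ∀ k < 4, ∃ o ∈ R, o.covers (p + k))
    (h₀₁ : ∀ o ∈ R, o.covers p → o.covers (p + 1) → o.src = none)
    (h₂₃ : ∀ o ∈ R, o.covers (p + 2) → o.covers (p + 3) → o.src = none) :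
    3 ≤ cost R := by
  obtain ⟨o₁, ho₁, hc₁⟩ := hcov 0 (by omega)
  obtain ⟨o₄, ho₄, hc₄⟩ := hcov 3 (by omega)
  have hle : ∀ o ∈ R, o.cost ≤ cost R := fun o ho =>
    Finset.single_le_sum (f := Op.cost) (fun _ _ => Nat.zero_le _) ho
  by_cases h₁₄ : o₁ = o₄
  · subst h₁₄
    have hloss := h₀₁ o₁ ho₁ hc₁ (o₁.covers_of_le_of_le hc₁ hc₄ (by omega) (by omega))
    have hcost := hle o₁ ho₁
    rw [Op.cost_eq_len hloss] at hcost
    have := hc₁.1; have := hc₄.2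
    omega
  by_cases hcheap : o₁.cost = 1 ∧ o₄.cost = 1
  · have hn₁ : ¬ o₁.covers (p + 1) := fun h => by
      rw [Op.cost_eq_len (h₀₁ o₁ ho₁ hc₁ h)] at hcheap
      have := hc₁.1; have := h.2
      omega
    have hn₄ : ¬ o₄.covers (p + 1) := fun h => by
      rw [Op.cost_eq_len (h₂₃ o₄ ho₄ (o₄.covers_of_le_of_le h hc₄ (by omega) (by omega)) hc₄)]
        at hcheap
      have := h.1; have := hc₄.2
      omega
    obtain ⟨o₂, ho₂, hc₂⟩ := hcov 1 (by omega)
    have hthree : 2 < R.card := Finset.two_lt_card.2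
      ⟨o₁, ho₁, o₂, ho₂, o₄, ho₄, fun h => hn₁ (h ▸ hc₂), h₁₄, fun h => hn₄ (h ▸ hc₂)⟩
    have := card_le_cost hR
    omega
  · have hpair : o₁.cost + o₄.cost ≤ cost R := by
      rw [← Finset.sum_pair h₁₄]
      exact Finset.sum_le_sum_of_subset (Finset.insert_subset ho₁ (by simpa using ho₄))
    have := Op.one_le_cost (hR o₁ ho₁)
    have := Op.one_le_cost (hR o₄ ho₄)
    omega

end Labeling

variable {n : ℕ} (G : SimpleGraph (Fin n)) [DecidableRel G.Adj]

theorem nodup_edgePairs : (edgePairs G).Nodup := by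
  refine List.nodup_flatMap.2 ⟨fun i _ => ?_, (List.nodup_finRange n).imp ?_⟩
  · exact ((List.nodup_finRange n).filter _).map fun j j' h => by simpa using h
  · intro i i' hii' E hE hE'
    simp only [List.mem_map, List.mem_filter] at hE hE'
    obtain ⟨j, -, rfl⟩ := hE
    obtain ⟨j', -, h⟩ := hE'
    exact hii' (congrArg Prod.fst h).symm

theorem enc_eq (i : Fin n) (E : Fin n × Fin n) : enc G i E =
    if i = E.1 then [.x i (edgeIdx G i E), .e E.1 E.2 0, .e E.1 E.2 1]
    else [.e E.1 E.2 0, .e E.1 E.2 1, .x i (edgeIdx G i E)] := by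
  unfold enc encL encR; split_ifs <;> rfl

theorem length_vertexBlockX (i : Fin n) : (vertexBlockX G i).length = 18 := by
  simp only [vertexBlockX, enc_eq]; split_ifs <;> rfl

theorem length_flatMap_vertexBlockX :
    ((List.finRange n).flatMap fun i => vertexBlockX G i).length = 18 * n := by
  simp [length_vertexBlockX, mul_comm]

theorem length_anchorBlock (i : Fin n) : (A1Block i ++ A2Block G i).length = 33 := by
  simp only [A1Block, A2Block, encL, encR]; split_ifs <;> rfl

theorem eq_of_x_mem_vertexBlockX {i a : Fin n} {p : ℕ} (h : .x a p ∈ vertexBlockX G i) :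
    a = i := by
  simp only [vertexBlockX, enc_eq] at h
  split_ifs at h <;> simp at h <;> tauto

variable {G}

-- Adjacency inside a block is decided on constructor indices (`Sym.ctorIdx`): once the
-- encodings are unfolded and their `if`s split, these form concrete lists of numbers.

theorem vertexBlockX_pair_x_e {i a b c : Fin n} {r p : ℕ} {t : Fin 2}
    (h₀ : (vertexBlockX G i)[r]? = some (.x a p))
    (h₁ : (vertexBlockX G i)[r + 1]? = some (.e b c t)) :
    a = i ∧ ∃ m < 3, r = 3 + 5 * m := by
  refine ⟨eq_of_x_mem_vertexBlockX G (List.mem_of_getElem? h₀), ?_⟩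
  have hr : r < 18 := length_vertexBlockX G i ▸ (List.getElem?_eq_some_iff.1 h₀).1
  obtain ⟨k₀, k₁⟩ := List.pair_map Sym.ctorIdx h₀ h₁
  clear h₀ h₁
  revert hr k₀ k₁
  simp only [vertexBlockX, enc_eq]
  split_ifs <;> simp only [List.map_cons, List.map_nil, List.cons_append, List.nil_append,
    Sym.ctorIdx] <;> decide +revert

theorem vertexBlockX_pair_e_x {i a b c : Fin n} {r p : ℕ} {t : Fin 2}
    (h₀ : (vertexBlockX G i)[r]? = some (.e b c t))
    (h₁ : (vertexBlockX G i)[r + 1]? = some (.x a p)) :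
    a = i ∧ ∃ m < 3, r = 4 + 5 * m := by
  refine ⟨eq_of_x_mem_vertexBlockX G (List.mem_of_getElem? h₁), ?_⟩
  have hr : r < 18 := length_vertexBlockX G i ▸ (List.getElem?_eq_some_iff.1 h₀).1
  obtain ⟨k₀, k₁⟩ := List.pair_map Sym.ctorIdx h₀ h₁
  clear h₀ h₁
  revert hr k₀ k₁
  simp only [vertexBlockX, enc_eq]
  split_ifs <;> simp only [List.map_cons, List.map_nil, List.cons_append, List.nil_append,
    Sym.ctorIdx] <;> decide +revert

theorem anchorBlock_not_pair_x_e {i a b c : Fin n} {r p : ℕ} {t : Fin 2}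
    (h₀ : (A1Block i ++ A2Block G i)[r]? = some (.x a p))
    (h₁ : (A1Block i ++ A2Block G i)[r + 1]? = some (.e b c t)) : False := by
  have hr : r < 33 := length_anchorBlock G i ▸ (List.getElem?_eq_some_iff.1 h₀).1
  obtain ⟨k₀, k₁⟩ := List.pair_map Sym.ctorIdx h₀ h₁
  clear h₀ h₁
  revert hr k₀ k₁
  simp only [A1Block, A2Block, encL, encR]
  split_ifs <;> simp only [List.map_cons, List.map_nil, List.cons_append, List.nil_append,
    Sym.ctorIdx] <;> decide +revert

theorem anchorBlock_not_pair_e_x {i a b c : Fin n} {r p : ℕ} {t : Fin 2}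
    (h₀ : (A1Block i ++ A2Block G i)[r]? = some (.e b c t))
    (h₁ : (A1Block i ++ A2Block G i)[r + 1]? = some (.x a p)) : False := by
  have hr : r < 33 := length_anchorBlock G i ▸ (List.getElem?_eq_some_iff.1 h₀).1
  obtain ⟨k₀, k₁⟩ := List.pair_map Sym.ctorIdx h₀ h₁
  clear h₀ h₁
  revert hr k₀ k₁
  simp only [A1Block, A2Block, encL, encR]
  split_ifs <;> simp only [List.map_cons, List.map_nil, List.cons_append, List.nil_append,
    Sym.ctorIdx] <;> decide +revert

theorem edgeBlockX_pair_x_e {E : Fin n × Fin n} {a b c : Fin n} {r p : ℕ} {t : Fin 2}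
    (h₀ : (edgeBlockX G E)[r]? = some (.x a p))
    (h₁ : (edgeBlockX G E)[r + 1]? = some (.e b c t)) : r = 1 ∧ E = (b, c) := by
  have hr : r < 5 := (List.getElem?_eq_some_iff.1 h₀).1
  interval_cases r <;> simp only [edgeBlockX, List.getElem?_cons_succ, List.getElem?_cons_zero,
    List.getElem?_nil, Option.some.injEq, reduceCtorEq] at h₀ h₁
  obtain ⟨hb, hc, -⟩ := Sym.e.inj h₁
  exact ⟨rfl, Prod.ext hb hc⟩

theorem edgeBlockX_pair_e_x {E : Fin n × Fin n} {a b c : Fin n} {r p : ℕ} {t : Fin 2}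
    (h₀ : (edgeBlockX G E)[r]? = some (.e b c t))
    (h₁ : (edgeBlockX G E)[r + 1]? = some (.x a p)) : r = 3 ∧ E = (b, c) := by
  have hr : r < 5 := (List.getElem?_eq_some_iff.1 h₀).1
  interval_cases r <;> simp only [edgeBlockX, List.getElem?_cons_succ, List.getElem?_cons_zero,
    Option.some.injEq, reduceCtorEq] at h₀ h₁
  obtain ⟨hb, hc, -⟩ := Sym.e.inj h₀
  exact ⟨rfl, Prod.ext hb hc⟩

theorem genomeX_pair {q : ℕ} {a b : Sym n} (hs : ∀ i, b ≠ .s i) (hse : ∀ i j, b ≠ .se i j)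
    (hw : ∀ i, b ≠ .w i 0) (h₀ : (genomeX G)[q]? = some a) (h₁ : (genomeX G)[q + 1]? = some b) :
    (∃ i r, q = vStart i + r ∧
      (vertexBlockX G i)[r]? = some a ∧ (vertexBlockX G i)[r + 1]? = some b) ∨
    (∃ k, ∃ hk : k < (edgePairs G).length, ∃ r, q = 18 * n + 5 * k + r ∧
      (edgeBlockX G (edgePairs G)[k])[r]? = some a ∧
      (edgeBlockX G (edgePairs G)[k])[r + 1]? = some b) ∨
    (∃ i r, (A1Block i ++ A2Block G i)[r]? = some a ∧
      (A1Block i ++ A2Block G i)[r + 1]? = some b) := by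
  have hV := length_flatMap_vertexBlockX G
  have hA : ((List.finRange n).flatMap fun i => A1Block i ++ A2Block G i).head? ≠ some b :=
    List.head?_flatMap_ne fun i _ => by simpa [A1Block] using (hw i).symm
  have hEA : (((edgePairs G).flatMap fun E => edgeBlockX G E) ++
      (List.finRange n).flatMap fun i => A1Block i ++ A2Block G i).head? ≠ some b := by
    rw [List.head?_append, Ne, Option.or_eq_some_iff]
    rintro (h | ⟨-, h⟩)
    · exact List.head?_flatMap_ne (fun E _ => by simpa [edgeBlockX] using (hse _ _).symm) h
    · exact hA h
  unfold genomeX at h₀ h₁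
  rw [List.append_assoc] at h₀ h₁
  rcases List.pair_append hEA h₀ h₁ with ⟨h₀, h₁⟩ | ⟨hq, h₀, h₁⟩
  · obtain ⟨k, hk, r, rfl, h₀, h₁⟩ := List.pair_flatMap (fun i _ => length_vertexBlockX G i)
      (fun i _ => by simpa [vertexBlockX] using (hs i).symm) h₀ h₁
    exact Or.inl ⟨_, r, by simp [vStart], h₀, h₁⟩
  rcases List.pair_append hA h₀ h₁ with ⟨h₀, h₁⟩ | ⟨-, h₀, h₁⟩
  · obtain ⟨k, hk, r, hkr, h₀, h₁⟩ := List.pair_flatMap (L := 5) (fun _ _ => rfl)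
      (fun E _ => by simpa [edgeBlockX] using (hse _ _).symm) h₀ h₁
    exact Or.inr (Or.inl ⟨k, hk, r, by omega, h₀, h₁⟩)
  · obtain ⟨k, hk, r, -, h₀, h₁⟩ := List.pair_flatMap (fun i _ => length_anchorBlock G i)
      (fun i _ => by simpa [A1Block] using (hw i).symm) h₀ h₁
    exact Or.inr (Or.inr ⟨_, r, h₀, h₁⟩)

theorem genomeX_pair_x_e {q p : ℕ} {a b c : Fin n} {t : Fin 2}
    (h₀ : (genomeX G)[q]? = some (.x a p)) (h₁ : (genomeX G)[q + 1]? = some (.e b c t)) :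
    q = eStart G (b, c) + 1 ∨ ∃ m < 3, q = vStart a + 3 + 5 * m := by
  rcases genomeX_pair (by simp) (by simp) (by simp) h₀ h₁ with
    ⟨i, r, rfl, h₀, h₁⟩ | ⟨k, hk, r, rfl, h₀, h₁⟩ | ⟨i, r, h₀, h₁⟩
  · obtain ⟨rfl, m, hm, rfl⟩ := vertexBlockX_pair_x_e h₀ h₁
    exact Or.inr ⟨m, hm, by omega⟩
  · obtain ⟨rfl, hk'⟩ := edgeBlockX_pair_x_e h₀ h₁
    left
    rw [eStart, ← hk', (nodup_edgePairs G).idxOf_getElem]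
  · exact (anchorBlock_not_pair_x_e h₀ h₁).elim

theorem genomeX_pair_e_x {q p : ℕ} {a b c : Fin n} {t : Fin 2}
    (h₀ : (genomeX G)[q]? = some (.e b c t)) (h₁ : (genomeX G)[q + 1]? = some (.x a p)) :
    q = eStart G (b, c) + 3 ∨ ∃ m < 3, q = vStart a + 4 + 5 * m := by
  rcases genomeX_pair (by simp) (by simp) (by simp) h₀ h₁ with
    ⟨i, r, rfl, h₀, h₁⟩ | ⟨k, hk, r, rfl, h₀, h₁⟩ | ⟨i, r, h₀, h₁⟩
  · obtain ⟨rfl, m, hm, rfl⟩ := vertexBlockX_pair_e_x h₀ h₁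
    exact Or.inr ⟨m, hm, by omega⟩
  · obtain ⟨rfl, hk'⟩ := edgeBlockX_pair_e_x h₀ h₁
    left
    rw [eStart, ← hk', (nodup_edgePairs G).idxOf_getElem]
  · exact (anchorBlock_not_pair_e_x h₀ h₁).elim

variable (G)

theorem getElem?_genomeX_eStart_add {e : Fin n × Fin n} (he : e ∈ edgePairs G) {r : ℕ}
    (hr : r < 5) : (genomeX G)[eStart G e + r]? = (edgeBlockX G e)[r]? := by
  have hk := List.idxOf_lt_length_of_mem he
  have hV := length_flatMap_vertexBlockX G
  have hE : ((edgePairs G).flatMap fun E => edgeBlockX G E).length =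
      5 * (edgePairs G).length := by
    simp [edgeBlockX, mul_comm]
  unfold genomeX eStart
  rw [List.append_assoc, List.getElem?_append_right (by omega), hV,
    List.getElem?_append_left (by omega),
    List.getElem?_flatMap_of_length_eq (L := 5) (fun _ _ => rfl),
    show (18 * n + 5 * (edgePairs G).idxOf e + r - 18 * n) / 5 = (edgePairs G).idxOf e by omega,
    show (18 * n + 5 * (edgePairs G).idxOf e + r - 18 * n) % 5 = r by omega,
    List.getElem?_eq_getElem hk, List.getElem_idxOf, Option.bind_some]

theorem unmatchedX_edgeRegion_iff {k r : ℕ} (hk : k < (edgePairs G).length) (hr : r < 5) :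
    UnmatchedX G (18 * n + 5 * k + r) ↔ r ≠ 0 := by
  have hV : ((List.finRange n).flatMap fun i =>
      (some (.s i) : Option (Sym n)) :: List.replicate 17 none).length = 18 * n := by
    simp [mul_comm]
  have hE : ((edgePairs G).flatMap fun E =>
      (some (.se E.1 E.2) : Option (Sym n)) :: List.replicate 4 none).length =
        5 * (edgePairs G).length := by
    simp [mul_comm]
  unfold UnmatchedX alignedY
  rw [List.append_assoc, List.getElem?_append_right (by omega), hV,
    List.getElem?_append_left (by omega),
    List.getElem?_flatMap_of_length_eq (L := 5) (fun _ _ => rfl),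
    show (18 * n + 5 * k + r - 18 * n) / 5 = k by omega,
    show (18 * n + 5 * k + r - 18 * n) % 5 = r by omega,
    List.getElem?_eq_getElem hk, Option.bind_some]
  rcases r with _ | r
  · simp
  · rw [List.getElem?_cons_succ, List.getElem?_replicate_of_lt (by omega)]
    simp

theorem not_unmatchedX_of_le {q : ℕ} (hq : 18 * n + 5 * (edgePairs G).length ≤ q) :
    ¬ UnmatchedX G q := by
  unfold UnmatchedX alignedY
  rw [List.getElem?_append_right (by simp [mul_comm] at hq ⊢; omega)]
  intro h
  simpa using List.mem_of_getElem? h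

theorem unmatchedX_eStart_add_iff {e : Fin n × Fin n} (he : e ∈ edgePairs G) {r : ℕ}
    (hr : r < 5) : UnmatchedX G (eStart G e + r) ↔ r ≠ 0 :=
  unmatchedX_edgeRegion_iff G (List.idxOf_lt_length_of_mem he) hr

theorem not_unmatchedX_eStart {e : Fin n × Fin n} (he : e ∈ edgePairs G) :
    ¬ UnmatchedX G (eStart G e) := by
  simpa using unmatchedX_eStart_add_iff G he (r := 0) (by norm_num)

theorem not_unmatchedX_eStart_add_five {e : Fin n × Fin n} (he : e ∈ edgePairs G) :
    ¬ UnmatchedX G (eStart G e + 5) := by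
  have hk := List.idxOf_lt_length_of_mem he
  by_cases hnext : (edgePairs G).idxOf e + 1 < (edgePairs G).length
  · rw [eStart, show 18 * n + 5 * (edgePairs G).idxOf e + 5 =
      18 * n + 5 * ((edgePairs G).idxOf e + 1) + 0 by ring,
      unmatchedX_edgeRegion_iff G hnext (by omega)]
    simp
  · exact not_unmatchedX_of_le G (by unfold eStart; omega)

variable {G} {L : Finset Op} {e : Fin n × Fin n} {o : Op}

theorem bounds_of_mem_restrict_edgeBlock (hL : IsLabeling (genomeX G) (UnmatchedX G) L)
    (he : e ∈ edgePairs G) (ho : o ∈ restrict L (eStart G e) (eStart G e + 5)) :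
    eStart G e + 1 ≤ o.start ∧ o.start + o.len ≤ eStart G e + 5 := by
  obtain ⟨hoL, p, hp, hcov⟩ := Finset.mem_filter.1 ho
  have h₀ := hL.not_covers hoL (not_unmatchedX_eStart G he)
  have h₅ := hL.not_covers hoL (not_unmatchedX_eStart_add_five G he)
  simp only [Op.covers, Finset.mem_Ico] at hp hcov h₀ h₅
  omega

theorem src_mem_vertexBlock_of_covers_x_e (hL : IsLabeling (genomeX G) (UnmatchedX G) L)
    (he : e ∈ edgePairs G) (ho : o ∈ restrict L (eStart G e) (eStart G e + 5)) {s : ℕ}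
    (hs : o.src = some s) (h₁ : o.covers (eStart G e + 1)) (h₂ : o.covers (eStart G e + 2)) :
    vStart e.1 ≤ s ∧ s + o.len ≤ vStart e.1 + 18 := by
  have hvalid := hL.valid o (Finset.mem_filter.1 ho).1
  have hwin := bounds_of_mem_restrict_edgeBlock hL he ho
  have hstart : o.start = eStart G e + 1 := by have := h₁.1; omega
  have hx := hvalid.getElem?_src hs h₁
  have he₀ := hvalid.getElem?_src hs h₂
  rw [hstart, Nat.sub_self, add_zero, getElem?_genomeX_eStart_add G he (by norm_num)] at hx
  rw [hstart, show eStart G e + 2 - (eStart G e + 1) = 1 by omega,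
    getElem?_genomeX_eStart_add G he (by norm_num)] at he₀
  rcases genomeX_pair_x_e hx he₀ with h | ⟨m, hm, h⟩
  · rw [Prod.mk.eta] at h
    exact ((hvalid.2.2 s hs).1 (by omega)).elim
  · omega

theorem src_mem_vertexBlock_of_covers_e_x (hL : IsLabeling (genomeX G) (UnmatchedX G) L)
    (he : e ∈ edgePairs G) (ho : o ∈ restrict L (eStart G e) (eStart G e + 5)) {s : ℕ}
    (hs : o.src = some s) (h₃ : o.covers (eStart G e + 3)) (h₄ : o.covers (eStart G e + 4)) :
    vStart e.2 ≤ s ∧ s + o.len ≤ vStart e.2 + 18 := by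
  have hvalid := hL.valid o (Finset.mem_filter.1 ho).1
  have hwin := bounds_of_mem_restrict_edgeBlock hL he ho
  have hstart := h₃.1
  have he₁ := hvalid.getElem?_src hs h₃
  have hx := hvalid.getElem?_src hs h₄
  rw [getElem?_genomeX_eStart_add G he (by norm_num)] at he₁ hx
  rw [show eStart G e + 4 - o.start = eStart G e + 3 - o.start + 1 by omega, ← add_assoc] at hx
  rcases genomeX_pair_e_x he₁ hx with h | ⟨m, hm, h⟩
  · rw [Prod.mk.eta] at h
    exact ((hvalid.2.2 s hs).1 (by omega)).elim
  · omega

end MLA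

open MLA in
theorem edgeBlock_cost_three_lower_bound_general {n : ℕ} (G : SimpleGraph (Fin n))
    [DecidableRel G.Adj] (L : Finset Op) (hL : IsLabeling (genomeX G) (UnmatchedX G) L)
    (e : Fin n × Fin n) (he : e ∈ edgePairs G)
    (hnodup : ∀ o ∈ restrict L (eStart G e) (eStart G e + 5), ∀ s, o.src = some s →
      ¬ (vStart e.1 ≤ s ∧ s + o.len ≤ vStart e.1 + 18) ∧
      ¬ (vStart e.2 ≤ s ∧ s + o.len ≤ vStart e.2 + 18)) :
    3 ≤ blockCost L (eStart G e) (eStart G e + 5) := by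
  refine three_le_cost_of_no_dup_pairs (p := eStart G e + 1)
    (fun o ho => (hL.valid o (Finset.mem_filter.1 ho).1).1) (fun k hk => ?_) ?_ ?_
  · obtain ⟨o, ho, hcov⟩ :=
      hL.covers _ ((unmatchedX_eStart_add_iff G he (r := 1 + k) (by omega)).2 (by omega))
    rw [← add_assoc] at hcov
    exact ⟨o, Finset.mem_filter.2 ⟨ho, _, Finset.mem_Ico.2 ⟨by omega, by omega⟩, hcov⟩, hcov⟩
  · intro o ho h₁ h₂
    cases hs : o.src with
    | none => rfl
    | some s =>
      exact absurd (src_mem_vertexBlock_of_covers_x_e hL he ho hs h₁ h₂) (hnodup o ho s hs).1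
  · intro o ho h₃ h₄
    cases hs : o.src with
    | none => rfl
    | some s =>
      exact absurd (src_mem_vertexBlock_of_covers_e_x hL he ho hs h₃ h₄) (hnodup o ho s hs).2

open MLA in
/-- For every edge `{v_i, v_j}` of a cubic graph `G` and every
feasible labeling of `(X, Y)`, if no substring of `B_{X-VE}(e_{i,j})` is
labeled by a duplication coming from `B_{X-VE}(v_i)` or from `B_{X-VE}(v_j)`,
then the total cost of the operations labeling the unmatched characters of
`B_{X-VE}(e_{i,j})` is at least 3. -/
theorem edgeBlock_cost_three_lower_bound {n : ℕ} (G : SimpleGraph (Fin n))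
    [DecidableRel G.Adj] (hcubic : ∀ v : Fin n, G.degree v = 3)
    (L : Finset Op) (hL : IsLabeling (genomeX G) (UnmatchedX G) L)
    (hfeas : Feasible L) (e : Fin n × Fin n) (he : e ∈ edgePairs G)
    (hnodup : ∀ o ∈ restrict L (eStart G e) (eStart G e + 5), ∀ s, o.src = some s →
      ¬ (vStart e.1 ≤ s ∧ s + o.len ≤ vStart e.1 + 18) ∧
      ¬ (vStart e.2 ≤ s ∧ s + o.len ≤ vStart e.2 + 18)) :
    3 ≤ blockCost L (eStart G e) (eStart G e + 5) :=
  edgeBlock_cost_three_lower_bound_general G L hL e he hnodup
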